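/- arXiv:0903.0529 — 12 statements merged into one kernel-verified Lean document; each statement's English description precedes it below -/
import Mathlib

section
/- Let F : H → H be a monotone continuous operator and f_δ ∈ H, and suppose V : (0,∞) → H satisfies F(V(a)) + a·V(a) = f_δ for every a > 0. Then ‖F(V(a)) − f_δ‖ tends to ‖F(0) − f_δ‖ as a → ∞. -/
open scoped RealInnerProductSpace

theorem stmt1 {H : Type*} [NormedAddCommGroup H] [InnerProductSpace ℝ H]
    (F : H → H) (hF : ∀ u v : H, 0 ≤ ⟪F u - F v, u - v⟫)
    (hFc : Continuous F) (fδ : H) (V : ℝ → H)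
    (hV : ∀ a : ℝ, 0 < a → F (V a) + a • V a = fδ) :
    Filter.Tendsto (fun a => ‖F (V a) - fδ‖) Filter.atTop (nhds ‖F 0 - fδ‖) := by
  set C := ‖fδ - F 0‖ with hC
  have hbound : ∀ a : ℝ, 0 < a → ‖V a‖ ≤ C / a := by
    intro a ha
    have hFV : F (V a) = fδ - a • V a := by
      have := hV a ha; linear_combination (norm := module) this
    have h0 := hF (V a) 0
    rw [sub_zero, hFV] at h0
    have h1 : ⟪fδ - a • V a - F 0, V a⟫ = ⟪fδ - F 0, V a⟫ - a * ‖V a‖ ^ 2 := by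
      have : fδ - a • V a - F 0 = (fδ - F 0) - a • V a := by abel
      rw [this, inner_sub_left, real_inner_smul_left, real_inner_self_eq_norm_sq]
    rw [h1] at h0
    have h2 : a * ‖V a‖ ^ 2 ≤ ⟪fδ - F 0, V a⟫ := by linarith
    have h3 : ⟪fδ - F 0, V a⟫ ≤ C * ‖V a‖ := real_inner_le_norm _ _
    rcases eq_or_lt_of_le (norm_nonneg (V a)) with h4 | h4
    · rw [← h4]; positivity
    · rw [le_div_iff₀ ha]
      nlinarith
  have hV0 : Filter.Tendsto V Filter.atTop (nhds 0) := by
    rw [tendsto_zero_iff_norm_tendsto_zero]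
    apply squeeze_zero' (Filter.Eventually.of_forall fun a => norm_nonneg _)
    · filter_upwards [Filter.eventually_gt_atTop 0] with a ha using hbound a ha
    · exact Filter.Tendsto.div_atTop tendsto_const_nhds Filter.tendsto_id
  have : Filter.Tendsto (fun a => F (V a) - fδ) Filter.atTop (nhds (F 0 - fδ)) :=
    ((hFc.tendsto 0).comp hV0).sub_const fδ
  exact this.norm
end

section
/- Let F : H → H be a monotone operator and f_δ ∈ H. For i = 1, 2 let a_i > 0 and V_i ∈ H satisfy F(V_i) + a_i V_i = f_δ. Then (a_1‖V_1‖ − a_2‖V_2‖)(‖V_2‖ − ‖V_1‖) ≥ 0. -/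
open scoped RealInnerProductSpace

theorem stmt2 {H : Type*} [NormedAddCommGroup H] [InnerProductSpace ℝ H]
    (F : H → H) (hF : ∀ u v : H, 0 ≤ ⟪F u - F v, u - v⟫)
    (fδ : H) (a₁ a₂ : ℝ) (ha₁ : 0 < a₁) (ha₂ : 0 < a₂) (V₁ V₂ : H)
    (hV₁ : F V₁ + a₁ • V₁ = fδ) (hV₂ : F V₂ + a₂ • V₂ = fδ) :
    0 ≤ (a₁ * ‖V₁‖ - a₂ * ‖V₂‖) * (‖V₂‖ - ‖V₁‖) := by
  have hdiff : F V₁ - F V₂ = a₂ • V₂ - a₁ • V₁ := by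
    have h := hV₁.trans hV₂.symm
    linear_combination (norm := module) h
  have hmono := hF V₁ V₂
  rw [hdiff] at hmono
  have hexp : ⟪a₂ • V₂ - a₁ • V₁, V₁ - V₂⟫ =
      (a₁ + a₂) * ⟪V₁, V₂⟫ - a₁ * ‖V₁‖ ^ 2 - a₂ * ‖V₂‖ ^ 2 := by
    simp [inner_sub_sub_self, inner_sub_left, inner_sub_right, inner_smul_left,
      inner_smul_right, real_inner_self_eq_norm_sq, real_inner_comm V₂ V₁]
    ring
  rw [hexp] at hmono
  have hcs : ⟪V₁, V₂⟫ ≤ ‖V₁‖ * ‖V₂‖ := real_inner_le_norm V₁ V₂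
  nlinarith [hmono, hcs, ha₁.le, ha₂.le, norm_nonneg V₁, norm_nonneg V₂]
end

section
/- Let F : H → H be a monotone operator, f_δ ∈ H with ‖F(0) − f_δ‖ > 0, let a : [0,∞) → ℝ be strictly decreasing with a(t) > 0 for all t, and let V_δ : [0,∞) → H satisfy F(V_δ(t)) + a(t)V_δ(t) = f_δ for all t ≥ 0. Then ψ(t) := ‖V_δ(t)‖ is strictly increasing on [0,∞), and φ(t) := ‖F(V_δ(t)) − f_δ‖ = a(t)‖V_δ(t)‖ is nonincreasing on [0,∞) (i.e., t_1 < t_2 implies ψ(t_1) < ψ(t_2) and φ(t_1) ≥ φ(t_2)). -/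
open scoped RealInnerProductSpace

theorem stmt3 {H : Type*} [NormedAddCommGroup H] [InnerProductSpace ℝ H]
    (F : H → H) (hF : ∀ u v : H, 0 ≤ ⟪F u - F v, u - v⟫)
    (fδ : H) (hne : 0 < ‖F 0 - fδ‖)
    (a : ℝ → ℝ) (hapos : ∀ t : ℝ, 0 ≤ t → 0 < a t)
    (hadec : ∀ t₁ t₂ : ℝ, 0 ≤ t₁ → t₁ < t₂ → a t₂ < a t₁)
    (V : ℝ → H) (hV : ∀ t : ℝ, 0 ≤ t → F (V t) + a t • V t = fδ) :
    ∀ t₁ t₂ : ℝ, 0 ≤ t₁ → t₁ < t₂ →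
      ‖V t₁‖ < ‖V t₂‖ ∧ ‖F (V t₂) - fδ‖ ≤ ‖F (V t₁) - fδ‖ := by
  intro t₁ t₂ ht₁ hlt
  have ht₂ : (0:ℝ) ≤ t₂ := ht₁.trans hlt.le
  have h1 := hV t₁ ht₁
  have h2 := hV t₂ ht₂
  have e1 : F (V t₁) = fδ - a t₁ • V t₁ := by rw [← h1]; abel
  have e2 : F (V t₂) = fδ - a t₂ • V t₂ := by rw [← h2]; abel
  have ha1 := hapos t₁ ht₁
  have ha2 := hapos t₂ ht₂
  have ha12 := hadec t₁ t₂ ht₁ hlt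
  have hVne : ∀ t, 0 ≤ t → V t ≠ 0 := by
    intro t ht h0
    have h := hV t ht
    rw [h0, smul_zero, add_zero] at h
    rw [h, sub_self, norm_zero] at hne
    exact lt_irrefl 0 hne
  set x := ‖V t₁‖ with hxdef
  set y := ‖V t₂‖ with hydef
  have hx : 0 < x := norm_pos_iff.mpr (hVne t₁ ht₁)
  have hy : 0 < y := norm_pos_iff.mpr (hVne t₂ ht₂)
  set s := ⟪V t₁, V t₂⟫ with hs
  have hmono := hF (V t₁) (V t₂)
  have hexp : ⟪F (V t₁) - F (V t₂), V t₁ - V t₂⟫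
      = (a t₁ + a t₂) * s - a t₁ * x ^ 2 - a t₂ * y ^ 2 := by
    rw [e1, e2, show (fδ - a t₁ • V t₁) - (fδ - a t₂ • V t₂)
        = a t₂ • V t₂ - a t₁ • V t₁ by abel]
    have hcomm : (⟪V t₂, V t₁⟫ : ℝ) = s := real_inner_comm _ _
    rw [inner_sub_left, inner_sub_right, inner_sub_right,
      real_inner_smul_left, real_inner_smul_left, real_inner_smul_left,
      real_inner_smul_left, real_inner_self_eq_norm_sq, real_inner_self_eq_norm_sq,
      hcomm, ← hxdef, ← hydef]
    ring
  have hkey : a t₁ * x ^ 2 + a t₂ * y ^ 2 ≤ (a t₁ + a t₂) * s := by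
    rw [hexp] at hmono; linarith
  have hCS : s ≤ x * y := real_inner_le_norm _ _
  have hq : (x - y) * (a t₁ * x - a t₂ * y) ≤ 0 := by
    have h5 : (a t₁ + a t₂) * s ≤ (a t₁ + a t₂) * (x * y) :=
      mul_le_mul_of_nonneg_left hCS (by linarith)
    nlinarith [hkey, h5]
  have hxy : x < y := by
    by_contra hcon
    push_neg at hcon
    have h4 : a t₂ * y < a t₁ * x := by nlinarith
    have hxley : x ≤ y := by nlinarith [hq, h4]
    have hxey : x = y := le_antisymm hxley hcon
    have hseq : s = x * y := by
      refine le_antisymm hCS ?_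
      nlinarith [hkey, hxey]
    have hV12 : V t₁ = V t₂ := by
      have hn : ‖V t₁ - V t₂‖ ^ 2 = 0 := by
        rw [norm_sub_sq_real, ← hxdef, ← hydef, ← hs, hseq, hxey]; ring
      have := pow_eq_zero_iff (n := 2) (by norm_num) |>.1 hn
      rw [norm_eq_zero, sub_eq_zero] at this
      exact this
    have hsm : (a t₁ - a t₂) • V t₁ = 0 := by
      have h1' := h1
      rw [hV12] at h1'
      have : a t₁ • V t₂ = a t₂ • V t₂ := by
        have := h1'.trans h2.symm
        exact add_left_cancel this
      rw [hV12, sub_smul, this, sub_self]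
    rcases smul_eq_zero.1 hsm with h | h
    · have : a t₁ = a t₂ := by linarith [sub_eq_zero.1 h]
      linarith
    · exact hVne t₁ ht₁ h
  constructor
  · exact hxy
  · have n1 : ‖F (V t₁) - fδ‖ = a t₁ * x := by
      rw [e1, show fδ - a t₁ • V t₁ - fδ = -(a t₁ • V t₁) by abel, norm_neg, norm_smul,
        Real.norm_eq_abs, abs_of_pos ha1]
    have n2 : ‖F (V t₂) - fδ‖ = a t₂ * y := by
      rw [e2, show fδ - a t₂ • V t₂ - fδ = -(a t₂ • V t₂) by abel, norm_neg, norm_smul,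
        Real.norm_eq_abs, abs_of_pos ha2]
    rw [n1, n2]
    nlinarith
end

section
/- Let F : H → H be a monotone operator, a > 0, δ ≥ 0, y ∈ H with F(y) = f, and f_δ ∈ H with ‖f − f_δ‖ ≤ δ. If V_δ ∈ H satisfies F(V_δ) + aV_δ = f_δ, then a‖V_δ − y‖ ≤ a‖y‖ + δ; consequently ‖V_δ‖ ≤ 2‖y‖ + δ/a. -/
open scoped RealInnerProductSpace

/-!
Adding `a • id` to a monotone operator makes it `a`-strongly monotone, so by Cauchy–Schwarz
`a ‖V_δ - y‖ ≤ ‖(F V_δ + a V_δ) - (F y + a y)‖ = ‖f_δ - f - a y‖ ≤ δ + a ‖y‖`.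
The bound on `‖V_δ‖` follows by the triangle inequality.
-/

section StrongMonotone

variable {H : Type*} [NormedAddCommGroup H] [InnerProductSpace ℝ H]

theorem mul_norm_le_of_mul_norm_sq_le_inner {a : ℝ} {x w : H} (h : a * ‖x‖ ^ 2 ≤ ⟪w, x⟫) :
    a * ‖x‖ ≤ ‖w‖ := by
  rcases (norm_nonneg x).eq_or_lt with hx | hx
  · rw [← hx, mul_zero]
    exact norm_nonneg w
  · have : a * ‖x‖ * ‖x‖ ≤ ‖w‖ * ‖x‖ := by
      rw [mul_assoc, ← sq]
      exact h.trans (real_inner_le_norm w x)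
    exact le_of_mul_le_mul_right this hx

theorem mul_norm_sq_le_inner_add_smul_of_monotone {F : H → H}
    (hF : ∀ u v : H, 0 ≤ ⟪F u - F v, u - v⟫) (a : ℝ) (u v : H) :
    a * ‖u - v‖ ^ 2 ≤ ⟪(F u + a • u) - (F v + a • v), u - v⟫ := by
  have hsplit : (F u + a • u) - (F v + a • v) = (F u - F v) + a • (u - v) := by
    rw [smul_sub]; abel
  rw [hsplit, inner_add_left, real_inner_smul_left, real_inner_self_eq_norm_sq]
  linarith [hF u v]

theorem mul_norm_sub_le_norm_sub_add_smul_of_monotone {F : H → H}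
    (hF : ∀ u v : H, 0 ≤ ⟪F u - F v, u - v⟫) (a : ℝ) (u v : H) :
    a * ‖u - v‖ ≤ ‖(F u + a • u) - (F v + a • v)‖ :=
  mul_norm_le_of_mul_norm_sq_le_inner (mul_norm_sq_le_inner_add_smul_of_monotone hF a u v)

end StrongMonotone

theorem stmt6_general {H : Type*} [NormedAddCommGroup H] [InnerProductSpace ℝ H]
    (F : H → H) (hF : ∀ u v : H, 0 ≤ ⟪F u - F v, u - v⟫)
    (a δ : ℝ) (ha : 0 < a)
    (y f fδ : H) (hFy : F y = f) (hfδ : ‖f - fδ‖ ≤ δ)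
    (Vδ : H) (hVδ : F Vδ + a • Vδ = fδ) :
    a * ‖Vδ - y‖ ≤ a * ‖y‖ + δ ∧ ‖Vδ‖ ≤ 2 * ‖y‖ + δ / a := by
  have hdist : a * ‖Vδ - y‖ ≤ a * ‖y‖ + δ :=
    calc a * ‖Vδ - y‖ ≤ ‖(F Vδ + a • Vδ) - (F y + a • y)‖ :=
          mul_norm_sub_le_norm_sub_add_smul_of_monotone hF a Vδ y
      _ = ‖(fδ - f) - a • y‖ := by rw [hVδ, hFy, sub_add_eq_sub_sub]
      _ ≤ ‖fδ - f‖ + ‖a • y‖ := norm_sub_le _ _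
      _ = ‖f - fδ‖ + a * ‖y‖ := by rw [norm_sub_rev, norm_smul, Real.norm_of_nonneg ha.le]
      _ ≤ a * ‖y‖ + δ := by linarith
  refine ⟨hdist, ?_⟩
  have hdist' : ‖Vδ - y‖ ≤ ‖y‖ + δ / a := by
    rw [← mul_le_mul_iff_right₀ ha, mul_add, mul_div_cancel₀ δ ha.ne']
    exact hdist
  calc ‖Vδ‖ ≤ ‖Vδ - y‖ + ‖y‖ := norm_le_norm_sub_add Vδ y
    _ ≤ 2 * ‖y‖ + δ / a := by linarith

theorem stmt6 {H : Type*} [NormedAddCommGroup H] [InnerProductSpace ℝ H]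
    (F : H → H) (hF : ∀ u v : H, 0 ≤ ⟪F u - F v, u - v⟫)
    (a δ : ℝ) (ha : 0 < a) (hδ : 0 ≤ δ)
    (y f fδ : H) (hFy : F y = f) (hfδ : ‖f - fδ‖ ≤ δ)
    (Vδ : H) (hVδ : F Vδ + a • Vδ = fδ) :
    a * ‖Vδ - y‖ ≤ a * ‖y‖ + δ ∧ ‖Vδ‖ ≤ 2 * ‖y‖ + δ / a :=
  stmt6_general F hF a δ ha y f fδ hFy hfδ Vδ hVδ
end

section
/- Let F : H → H be a monotone operator, a > 0, δ ≥ 0, y ∈ H with F(y) = f, and f_δ ∈ H with ‖f − f_δ‖ ≤ δ. If V_δ ∈ H satisfies F(V_δ) + aV_δ = f_δ, then ‖F(V_δ) − f_δ‖² ≤ aδ‖V_δ − y‖ + a‖y‖·‖F(V_δ) − f_δ‖. -/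
open scoped RealInnerProductSpace

theorem stmt7 {H : Type*} [NormedAddCommGroup H] [InnerProductSpace ℝ H]
    (F : H → H) (hF : ∀ u v : H, 0 ≤ ⟪F u - F v, u - v⟫)
    (a δ : ℝ) (ha : 0 < a) (hδ : 0 ≤ δ)
    (y f fδ : H) (hFy : F y = f) (hfδ : ‖f - fδ‖ ≤ δ)
    (Vδ : H) (hVδ : F Vδ + a • Vδ = fδ) :
    ‖F Vδ - fδ‖ ^ 2 ≤ a * δ * ‖Vδ - y‖ + a * ‖y‖ * ‖F Vδ - fδ‖ := by
  have h1 : F Vδ - fδ = -(a • Vδ) := by rw [← hVδ]; abel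
  have key : ‖F Vδ - fδ‖ ^ 2 = -a * ⟪F Vδ - fδ, Vδ⟫ := by
    rw [← real_inner_self_eq_norm_sq]
    nth_rewrite 2 [h1]
    rw [inner_neg_right, real_inner_smul_right]
    ring
  have hm : 0 ≤ ⟪F Vδ - F y, Vδ - y⟫ := hF _ _
  have hsplit : F Vδ - fδ = (F Vδ - F y) + (f - fδ) := by rw [hFy]; abel
  have hcs1 : -(δ * ‖Vδ - y‖) ≤ ⟪f - fδ, Vδ - y⟫ := by
    have := abs_real_inner_le_norm (f - fδ) (Vδ - y)
    have hle : ‖f - fδ‖ * ‖Vδ - y‖ ≤ δ * ‖Vδ - y‖ :=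
      mul_le_mul_of_nonneg_right hfδ (norm_nonneg _)
    nlinarith [abs_nonneg ⟪f - fδ, Vδ - y⟫, neg_abs_le ⟪f - fδ, Vδ - y⟫]
  have h2 : -(δ * ‖Vδ - y‖) ≤ ⟪F Vδ - fδ, Vδ - y⟫ := by
    rw [hsplit, inner_add_left]
    linarith
  have hcs2 : -(‖F Vδ - fδ‖ * ‖y‖) ≤ ⟪F Vδ - fδ, y⟫ := by
    have h := abs_real_inner_le_norm (F Vδ - fδ) y
    nlinarith [neg_abs_le ⟪F Vδ - fδ, y⟫]
  have h3 : ⟪F Vδ - fδ, Vδ⟫ = ⟪F Vδ - fδ, Vδ - y⟫ + ⟪F Vδ - fδ, y⟫ := by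
    rw [← inner_add_right]; congr 1; abel
  rw [key]
  nlinarith [h2, hcs2]
end

section
/- Let F : H → H be a monotone operator, δ ≥ 0, y ∈ H with F(y) = f, and f_δ ∈ H with ‖f − f_δ‖ ≤ δ. Let a : [0,∞) → ℝ satisfy a(t) > 0 for all t and a(t) → 0 as t → ∞, and let V_δ : [0,∞) → H satisfy F(V_δ(t)) + a(t)V_δ(t) = f_δ for all t ≥ 0. Then limsup_{t→∞} ‖F(V_δ(t)) − f_δ‖ ≤ δ. -/
open scoped RealInnerProductSpace

theorem stmt8 {H : Type*} [NormedAddCommGroup H] [InnerProductSpace ℝ H]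
    (F : H → H) (hF : ∀ u v : H, 0 ≤ ⟪F u - F v, u - v⟫)
    (δ : ℝ) (hδ : 0 ≤ δ) (y f fδ : H) (hFy : F y = f) (hfδ : ‖f - fδ‖ ≤ δ)
    (a : ℝ → ℝ) (hapos : ∀ t : ℝ, 0 ≤ t → 0 < a t)
    (halim : Filter.Tendsto a Filter.atTop (nhds 0))
    (V : ℝ → H) (hV : ∀ t : ℝ, 0 ≤ t → F (V t) + a t • V t = fδ) :
    Filter.limsup (fun t => ‖F (V t) - fδ‖) Filter.atTop ≤ δ := by
  -- pointwise estimate: ‖F (V t) - fδ‖ ≤ δ + 2 * a t * ‖y‖ for t ≥ 0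
  have key : ∀ t : ℝ, 0 ≤ t → ‖F (V t) - fδ‖ ≤ δ + 2 * a t * ‖y‖ := by
    intro t ht
    have hat := hapos t ht
    have hVt := hV t ht
    have hFV : F (V t) = fδ - a t • V t := by
      rw [eq_sub_iff_add_eq]; exact hVt
    set w := V t - y with hw
    have hmono := hF (V t) y
    rw [hFV, hFy] at hmono
    -- ⟪fδ - a t • V t - f, w⟫ ≥ 0
    have h1 : a t * ⟪V t, w⟫ ≤ ⟪fδ - f, w⟫ := by
      have : ⟪fδ - a t • V t - f, w⟫ = ⟪fδ - f, w⟫ - a t * ⟪V t, w⟫ := by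
        rw [show fδ - a t • V t - f = (fδ - f) - a t • V t by abel,
          inner_sub_left, real_inner_smul_left]
      linarith [hmono, this ▸ hmono]
    have h2 : ⟪V t, w⟫ = ‖w‖ ^ 2 + ⟪y, w⟫ := by
      have : V t = w + y := by rw [hw]; abel
      rw [this, inner_add_left, real_inner_self_eq_norm_sq]
    have h3 : ⟪fδ - f, w⟫ ≤ δ * ‖w‖ := by
      calc ⟪fδ - f, w⟫ ≤ ‖fδ - f‖ * ‖w‖ := real_inner_le_norm _ _
        _ ≤ δ * ‖w‖ := by
            have : ‖fδ - f‖ ≤ δ := by rwa [norm_sub_rev] at hfδ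
            exact mul_le_mul_of_nonneg_right this (norm_nonneg _)
    have h4 : -(‖y‖ * ‖w‖) ≤ ⟪y, w⟫ := neg_le_of_neg_le (by
      have := real_inner_le_norm y w
      have := abs_real_inner_le_norm y w
      nlinarith [abs_le.mp (abs_real_inner_le_norm y w)])
    -- a t * ‖w‖^2 ≤ (δ + a t * ‖y‖) * ‖w‖
    have h5 : a t * ‖w‖ ^ 2 ≤ (δ + a t * ‖y‖) * ‖w‖ := by nlinarith
    have hwnn : (0:ℝ) ≤ ‖w‖ := norm_nonneg _
    have h6 : a t * ‖w‖ ≤ δ + a t * ‖y‖ := by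
      rcases eq_or_lt_of_le hwnn with h | h
      · nlinarith [norm_nonneg y]
      · nlinarith
    have hnorm : ‖F (V t) - fδ‖ = a t * ‖V t‖ := by
      rw [hFV, show fδ - a t • V t - fδ = -(a t • V t) by abel, norm_neg, norm_smul,
        Real.norm_eq_abs, abs_of_pos hat]
    rw [hnorm]
    have hVle : ‖V t‖ ≤ ‖w‖ + ‖y‖ := by
      have : V t = w + y := by rw [hw]; abel
      rw [this]; exact norm_add_le _ _
    nlinarith
  -- conclude
  have hcb : Filter.IsCoboundedUnder (· ≤ ·) Filter.atTop
      (fun t => ‖F (V t) - fδ‖) := by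
    exact Filter.IsBoundedUnder.isCoboundedUnder_le (Filter.isBoundedUnder_of (r := (· ≥ ·)) ⟨0, fun t => norm_nonneg _⟩)
  refine le_of_forall_pos_le_add fun ε hε => ?_
  apply Filter.limsup_le_of_le hcb
  have hsmall : ∀ᶠ t in Filter.atTop, |a t| < ε / (2 * ‖y‖ + 1) := by
    have := halim.eventually (gt_mem_nhds (show (0:ℝ) < ε / (2 * ‖y‖ + 1) by positivity))
    filter_upwards [this, halim.eventually
      (eventually_gt_nhds (neg_lt_zero.mpr (show (0:ℝ) < ε / (2 * ‖y‖ + 1) by positivity)))] with t h1 h2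
    rw [abs_lt]; exact ⟨h2, h1⟩
  filter_upwards [hsmall, Filter.eventually_ge_atTop (0:ℝ)] with t hsm ht
  have h := key t ht
  have hat := (hapos t ht).le
  have : 2 * a t * ‖y‖ ≤ ε := by
    have h1 : a t < ε / (2 * ‖y‖ + 1) := by rwa [abs_of_nonneg hat] at hsm
    have h2 : a t * (2 * ‖y‖ + 1) ≤ ε / (2 * ‖y‖ + 1) * (2 * ‖y‖ + 1) := by
      apply mul_le_mul_of_nonneg_right h1.le; positivity
    rw [div_mul_cancel₀] at h2
    · nlinarith [norm_nonneg y]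
    · positivity
  linarith
end

section
/- Let F : H → H be a monotone continuous operator, δ > 0, C > 1, y ∈ H with F(y) = f, and f_δ ∈ H with ‖f − f_δ‖ ≤ δ. Let a : [0,∞) → ℝ be continuous, strictly decreasing, with a(t) > 0 for all t and a(t) → 0 as t → ∞, and let V_δ : [0,∞) → H be continuous and satisfy F(V_δ(t)) + a(t)V_δ(t) = f_δ for all t ≥ 0. If ‖F(V_δ(0)) − f_δ‖ > Cδ, then there exists t_1 > 0 such that ‖F(V_δ(t_1)) − f_δ‖ = Cδ. -/
open scoped RealInnerProductSpace

theorem stmt9 {H : Type*} [NormedAddCommGroup H] [InnerProductSpace ℝ H]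
    (F : H → H) (hF : ∀ u v : H, 0 ≤ ⟪F u - F v, u - v⟫) (hFc : Continuous F)
    (δ C : ℝ) (hδ : 0 < δ) (hC : 1 < C)
    (y f fδ : H) (hFy : F y = f) (hfδ : ‖f - fδ‖ ≤ δ)
    (a : ℝ → ℝ) (hac : Continuous a)
    (hadec : ∀ t₁ t₂ : ℝ, 0 ≤ t₁ → t₁ < t₂ → a t₂ < a t₁)
    (hapos : ∀ t : ℝ, 0 ≤ t → 0 < a t)
    (halim : Filter.Tendsto a Filter.atTop (nhds 0))
    (V : ℝ → H) (hVc : Continuous V)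
    (hV : ∀ t : ℝ, 0 ≤ t → F (V t) + a t • V t = fδ)
    (hinit : C * δ < ‖F (V 0) - fδ‖) :
    ∃ t₁ : ℝ, 0 < t₁ ∧ ‖F (V t₁) - fδ‖ = C * δ := by
  -- basic norm identity: F (V t) - fδ = -(a t • V t)
  have hsub : ∀ t : ℝ, 0 ≤ t → F (V t) - fδ = -(a t • V t) := by
    intro t ht
    have := hV t ht
    rw [← this]; abel
  have hnorm : ∀ t : ℝ, 0 ≤ t → ‖F (V t) - fδ‖ = a t * ‖V t‖ := by
    intro t ht
    rw [hsub t ht, norm_neg, norm_smul, Real.norm_eq_abs,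
      abs_of_pos (hapos t ht)]
  -- key inequality
  have key : ∀ t : ℝ, 0 ≤ t →
      a t * (‖V t‖ * ‖V t‖) ≤ a t * (‖V t‖ * ‖y‖) + δ * (‖V t‖ + ‖y‖) := by
    intro t ht
    have h1 := hF (V t) y
    have h2 : F (V t) - F y = (fδ - f) - a t • V t := by
      rw [hFy, ← hV t ht]; abel
    rw [h2] at h1
    rw [inner_sub_left, inner_smul_left] at h1
    have h3 : ⟪fδ - f, V t - y⟫ ≤ δ * (‖V t‖ + ‖y‖) := by
      calc ⟪fδ - f, V t - y⟫ ≤ ‖fδ - f‖ * ‖V t - y‖ := real_inner_le_norm _ _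
        _ ≤ δ * (‖V t‖ + ‖y‖) := by
            have := norm_sub_le (V t) y
            rw [← norm_neg (fδ - f), neg_sub]
            exact mul_le_mul hfδ this (norm_nonneg _)
              (le_of_lt hδ)
    have h4 : ⟪V t, V t - y⟫ = ‖V t‖ * ‖V t‖ - ⟪V t, y⟫ := by
      rw [inner_sub_right, real_inner_self_eq_norm_mul_norm]
    have h5 : ⟪V t, y⟫ ≤ ‖V t‖ * ‖y‖ := real_inner_le_norm _ _
    have hat := (hapos t ht).le
    simp only [starRingEnd_apply, star_trivial] at h1
    nlinarith [h1, h3, h4, h5, mul_le_mul_of_nonneg_left h5 hat]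
  -- choose ε and the threshold
  set ε : ℝ := (C - 1) / 2 with hε
  have hεpos : 0 < ε := div_pos (by linarith) two_pos
  set M : ℝ := ‖y‖ / ε with hM
  have hMnn : 0 ≤ M := div_nonneg (norm_nonneg _) hεpos.le
  set κ : ℝ := min ((C - 1) * δ / (2 * (‖y‖ + 1))) (C * δ / (M + 1)) with hκ
  have hC1 : (0:ℝ) < C - 1 := by linarith
  have hκpos : 0 < κ := by
    apply lt_min
    · exact div_pos (mul_pos hC1 hδ) (by positivity)
    · exact div_pos (mul_pos (by linarith : (0:ℝ) < C) hδ) (by linarith)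
  -- find T ≥ 1 with a T < κ
  obtain ⟨T, hTκ, hT1⟩ :=
    ((halim.eventually (gt_mem_nhds hκpos)).and (Filter.eventually_ge_atTop 1)).exists
  have hT0 : (0:ℝ) ≤ T := le_trans zero_le_one hT1
  -- show a T * ‖V T‖ < C * δ
  have hend : a T * ‖V T‖ < C * δ := by
    have hk := key T hT0
    have haT : 0 < a T := hapos T hT0
    rcases le_or_gt ‖V T‖ M with hle | hlt
    · have h1 : a T * ‖V T‖ ≤ a T * M := by nlinarith
      have h2 : a T * M < C * δ := by
        have h' : a T < C * δ / (M + 1) := lt_of_lt_of_le hTκ (min_le_right _ _)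
        have hM1 : (0:ℝ) < M + 1 := by linarith
        rw [lt_div_iff₀ hM1] at h'
        nlinarith
      linarith
    · -- ‖V T‖ > M ≥ 0, so positive; also ‖y‖ = ε * M ≤ ε * ‖V T‖
      have hVpos : 0 < ‖V T‖ := lt_of_le_of_lt hMnn hlt
      have hyM : ‖y‖ = ε * M := by
        rw [hM]; field_simp
      have hy2 : δ * ‖y‖ ≤ ε * δ * ‖V T‖ := by
        rw [hyM]
        nlinarith [mul_le_mul_of_nonneg_left hlt.le (mul_nonneg hδ.le hεpos.le)]
      -- divide: a T * ‖V T‖ ≤ a T * ‖y‖ + δ + ε * δ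
      have hdiv : a T * ‖V T‖ ≤ a T * ‖y‖ + δ + ε * δ := by
        nlinarith [hk, hy2]
      have h1 : a T < (C - 1) * δ / (2 * (‖y‖ + 1)) :=
        lt_of_lt_of_le hTκ (min_le_left _ _)
      have hy1 : 0 < ‖y‖ + 1 := by positivity
      have h2 : a T * ‖y‖ ≤ a T * (‖y‖ + 1) := by nlinarith
      have h3 : a T * (‖y‖ + 1) < (C - 1) * δ / 2 := by
        rw [lt_div_iff₀ (by positivity)] at h1
        nlinarith
      have : a T * ‖y‖ + δ + ε * δ < C * δ := by
        have : ε * δ = (C - 1) * δ / 2 := by rw [hε]; ring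
        linarith
      linarith
  -- IVT on [0, T]
  have hg : Continuous fun t => ‖F (V t) - fδ‖ :=
    ((hFc.comp hVc).sub continuous_const).norm
  have hmem : C * δ ∈ Set.Icc (‖F (V T) - fδ‖) (‖F (V 0) - fδ‖) := by
    constructor
    · rw [hnorm T hT0]; exact hend.le
    · exact hinit.le
  have := intermediate_value_Icc' hT0 (hg.continuousOn)
  obtain ⟨t₁, ht₁mem, ht₁⟩ := this hmem
  refine ⟨t₁, ?_, ht₁⟩
  rcases lt_or_eq_of_le ht₁mem.1 with h | h
  · exact h
  · exfalso
    rw [← h] at ht₁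
    exact absurd ht₁ (ne_of_gt hinit)
end

section
/- Let τ_0 ≥ 0, let α, β, γ : [τ_0, ∞) → ℝ be continuous and nonnegative, and let μ : [τ_0, ∞) → ℝ be continuously differentiable with μ(t) > 0 for all t and μ(t) → ∞ as t → ∞. Assume that for all t ≥ τ_0: α(t) ≤ (μ(t)/2)·(γ(t) − μ'(t)/μ(t)) and β(t) ≤ (1/(2μ(t)))·(γ(t) − μ'(t)/μ(t)). Let g : [τ_0, ∞) → ℝ be differentiable and nonnegative, with μ(τ_0)g(τ_0) < 1 and g'(t) ≤ −γ(t)g(t) + α(t)g(t)² + β(t) for all t ≥ τ_0. Then 0 ≤ g(t) < 1/μ(t) for all t ≥ τ_0; in particular g(t) → 0 as t → ∞. -/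
/-!
Put `h = μ g` and `k = γ - μ'/μ`. The bounds on `α` and `β` turn the differential inequality
for `g` into the Riccati inequality `h' ≤ (k/2) (1 - h)²`, whose right-hand side vanishes at
`h = 1`. On any compact interval `k/2 < C`, and `h` stays below the solution
`1 - 1/((1 - h(τ₀))⁻¹ + C (t - τ₀))` of `B' = C (1 - B)²`, which never reaches `1`.
Hence `μ g < 1`, and `g → 0` because `μ → ∞`.
-/

open Set Filter Topology

theorem mul_deriv_le_half_mul_one_sub_sq {m m' x x' a b c : ℝ} (hm : 0 < m)
    (ha : a ≤ m / 2 * (c - m' / m)) (hb : b ≤ 1 / (2 * m) * (c - m' / m))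
    (hx' : x' ≤ -c * x + a * x ^ 2 + b) :
    m' * x + m * x' ≤ (c - m' / m) / 2 * (1 - m * x) ^ 2 := by
  set k := c - m' / m with hk
  have hm' : m' = m * c - m * k := by rw [hk]; field_simp; ring
  have hax : m * (a * x ^ 2) ≤ m * (m / 2 * k * x ^ 2) :=
    mul_le_mul_of_nonneg_left (mul_le_mul_of_nonneg_right ha (sq_nonneg x)) hm.le
  have hbx : m * b ≤ m * (1 / (2 * m) * k) := mul_le_mul_of_nonneg_left hb hm.le
  calc m' * x + m * x' ≤ m' * x + m * (-c * x + a * x ^ 2 + b) := by gcongr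
    _ ≤ m' * x + m * (-c * x) + m * (m / 2 * k * x ^ 2) + m * (1 / (2 * m) * k) := by
      linarith
    _ = k / 2 * (1 - m * x) ^ 2 := by rw [hm']; field_simp; ring

theorem lt_one_of_deriv_le_mul_one_sub_sq {f f' c : ℝ → ℝ} {a b : ℝ}
    (hf : ContinuousOn f (Icc a b)) (hf' : ∀ x ∈ Ico a b, HasDerivWithinAt f (f' x) (Ici x) x)
    (hc : ContinuousOn c (Icc a b)) (hbound : ∀ x ∈ Ico a b, f' x ≤ c x * (1 - f x) ^ 2)
    (ha : f a < 1) : ∀ x ∈ Icc a b, f x < 1 := by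
  obtain ⟨C₀, hC₀⟩ := isCompact_Icc.bddAbove_image hc
  set C := max C₀ 0 + 1
  have hcC : ∀ x ∈ Icc a b, c x < C := fun x hx =>
    ((hC₀ (mem_image_of_mem c hx)).trans (le_max_left _ _)).trans_lt (lt_add_one _)
  set p : ℝ → ℝ := fun x => (1 - f a)⁻¹ + C * (x - a)
  have hp : ∀ x ∈ Icc a b, 0 < p x := fun x hx => by
    have : 0 < (1 - f a)⁻¹ := inv_pos.2 (sub_pos.2 ha)
    have : 0 ≤ C * (x - a) := mul_nonneg (by positivity) (sub_nonneg.2 hx.1)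
    simp only [p]; linarith
  have hB : ∀ x ∈ Icc a b, HasDerivAt (fun y => 1 - (p y)⁻¹) (C * ((p x)⁻¹) ^ 2) x := by
    intro x hx
    have hpx : HasDerivAt p C x :=
      ((((hasDerivAt_id' x).sub_const a).const_mul C).const_add _).congr_deriv (mul_one C)
    exact ((hpx.inv (hp x hx).ne').const_sub 1).congr_deriv (by field_simp)
  have hle : ∀ x ∈ Icc a b, f x ≤ 1 - (p x)⁻¹ := by
    refine image_le_of_deriv_right_lt_deriv_boundary' hf hf' (by simp [p]) ?_
      (fun x hx => (hB x (Ico_subset_Icc_self hx)).hasDerivWithinAt) ?_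
    · exact fun x hx => (hB x hx).continuousAt.continuousWithinAt
    · intro x hx hfx
      have hx' := Ico_subset_Icc_self hx
      have hsq : 0 < ((p x)⁻¹) ^ 2 := by have := hp x hx'; positivity
      calc f' x ≤ c x * (1 - f x) ^ 2 := hbound x hx
        _ = c x * ((p x)⁻¹) ^ 2 := by rw [hfx, sub_sub_cancel]
        _ < C * ((p x)⁻¹) ^ 2 := mul_lt_mul_of_pos_right (hcC x hx') hsq
  exact fun x hx => (hle x hx).trans_lt (sub_lt_self 1 (inv_pos.2 (hp x hx)))

theorem stmt10_general (τ₀ : ℝ)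
    (α β γ : ℝ → ℝ)
    (hγc : ContinuousOn γ (Set.Ici τ₀))
    (μ μ' : ℝ → ℝ) (hμd : ∀ t ∈ Set.Ici τ₀, HasDerivAt μ (μ' t) t)
    (hμ'c : ContinuousOn μ' (Set.Ici τ₀))
    (hμpos : ∀ t ∈ Set.Ici τ₀, 0 < μ t)
    (hμlim : Filter.Tendsto μ Filter.atTop Filter.atTop)
    (hαμ : ∀ t ∈ Set.Ici τ₀, α t ≤ μ t / 2 * (γ t - μ' t / μ t))
    (hβμ : ∀ t ∈ Set.Ici τ₀, β t ≤ 1 / (2 * μ t) * (γ t - μ' t / μ t))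
    (g g' : ℝ → ℝ) (hgd : ∀ t ∈ Set.Ici τ₀, HasDerivAt g (g' t) t)
    (hg0 : ∀ t ∈ Set.Ici τ₀, 0 ≤ g t)
    (hinit : μ τ₀ * g τ₀ < 1)
    (hgineq : ∀ t ∈ Set.Ici τ₀, g' t ≤ -(γ t) * g t + α t * g t ^ 2 + β t) :
    (∀ t ∈ Set.Ici τ₀, 0 ≤ g t ∧ g t < 1 / μ t) ∧
      Filter.Tendsto g Filter.atTop (nhds 0) := by
  have hμg : ∀ t ∈ Ici τ₀, HasDerivAt (fun s => μ s * g s) (μ' t * g t + μ t * g' t) t :=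
    fun t ht => (hμd t ht).mul (hgd t ht)
  have hk : ContinuousOn (fun t => (γ t - μ' t / μ t) / 2) (Ici τ₀) :=
    (hγc.sub (hμ'c.div (fun t ht => (hμd t ht).continuousAt.continuousWithinAt)
      (fun t ht => (hμpos t ht).ne'))).div_const 2
  have hlt : ∀ t ∈ Ici τ₀, μ t * g t < 1 := fun t ht =>
    lt_one_of_deriv_le_mul_one_sub_sq
      (fun s hs => (hμg s hs.1).continuousAt.continuousWithinAt)
      (fun s hs => (hμg s hs.1).hasDerivWithinAt) (hk.mono Icc_subset_Ici_self)
      (fun s hs => mul_deriv_le_half_mul_one_sub_sq (hμpos s hs.1) (hαμ s hs.1) (hβμ s hs.1)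
        (hgineq s hs.1)) hinit t ⟨ht, le_rfl⟩
  have hbound : ∀ t ∈ Ici τ₀, 0 ≤ g t ∧ g t < 1 / μ t := fun t ht =>
    ⟨hg0 t ht, by rw [lt_div_iff₀ (hμpos t ht), mul_comm]; exact hlt t ht⟩
  have hinv : Tendsto (fun t => 1 / μ t) atTop (𝓝 0) := by
    simpa only [one_div, Pi.inv_def] using hμlim.inv_tendsto_atTop
  refine ⟨hbound, tendsto_of_tendsto_of_tendsto_of_le_of_le' tendsto_const_nhds hinv ?_ ?_⟩
  · filter_upwards [eventually_ge_atTop τ₀] with t ht using (hbound t ht).1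
  · filter_upwards [eventually_ge_atTop τ₀] with t ht using (hbound t ht).2.le

theorem stmt10 (τ₀ : ℝ) (hτ₀ : 0 ≤ τ₀)
    (α β γ : ℝ → ℝ)
    (hαc : ContinuousOn α (Set.Ici τ₀)) (hβc : ContinuousOn β (Set.Ici τ₀))
    (hγc : ContinuousOn γ (Set.Ici τ₀))
    (hα0 : ∀ t ∈ Set.Ici τ₀, 0 ≤ α t) (hβ0 : ∀ t ∈ Set.Ici τ₀, 0 ≤ β t)
    (hγ0 : ∀ t ∈ Set.Ici τ₀, 0 ≤ γ t)
    (μ μ' : ℝ → ℝ) (hμd : ∀ t ∈ Set.Ici τ₀, HasDerivAt μ (μ' t) t)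
    (hμ'c : ContinuousOn μ' (Set.Ici τ₀))
    (hμpos : ∀ t ∈ Set.Ici τ₀, 0 < μ t)
    (hμlim : Filter.Tendsto μ Filter.atTop Filter.atTop)
    (hαμ : ∀ t ∈ Set.Ici τ₀, α t ≤ μ t / 2 * (γ t - μ' t / μ t))
    (hβμ : ∀ t ∈ Set.Ici τ₀, β t ≤ 1 / (2 * μ t) * (γ t - μ' t / μ t))
    (g g' : ℝ → ℝ) (hgd : ∀ t ∈ Set.Ici τ₀, HasDerivAt g (g' t) t)
    (hg0 : ∀ t ∈ Set.Ici τ₀, 0 ≤ g t)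
    (hinit : μ τ₀ * g τ₀ < 1)
    (hgineq : ∀ t ∈ Set.Ici τ₀, g' t ≤ -(γ t) * g t + α t * g t ^ 2 + β t) :
    (∀ t ∈ Set.Ici τ₀, 0 ≤ g t ∧ g t < 1 / μ t) ∧
      Filter.Tendsto g Filter.atTop (nhds 0) :=
  stmt10_general τ₀ α β γ hγc μ μ' hμd hμ'c hμpos hμlim hαμ hβμ g g' hgd hg0 hinit hgineq
end

section
/- Let p, b, c be positive real constants. Then for every t > 0 one has (p − b/c)·∫_0^t e^{ps}/(s+c)^b ds < e^{pt}/(c+t)^b. -/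
/-!
With `f s = exp (p s) / (s + c) ^ b` one has `f' = f · (p - b / (s + c)) ≥ (p - b / c) · f` on
`[0, t]`, so integrating gives `(p - b / c) ∫₀ᵗ f ≤ f t - f 0 < f t`.
-/

open Real Set intervalIntegral

theorem hasDerivAt_exp_mul_div_rpow_add (p b c : ℝ) {x : ℝ} (hx : 0 < x + c) :
    HasDerivAt (fun s => exp (p * s) / (s + c) ^ b)
      (exp (p * x) / (x + c) ^ b * (p - b / (x + c))) x := by
  have hexp : HasDerivAt (fun s => exp (p * s)) (exp (p * x) * p) x := by
    simpa using ((hasDerivAt_id x).const_mul p).exp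
  have hpow : HasDerivAt (fun s => (s + c) ^ b) (b * (x + c) ^ (b - 1)) x := by
    simpa using ((hasDerivAt_id x).add_const c).rpow_const (p := b) (Or.inl hx.ne')
  refine (hexp.div hpow (rpow_pos_of_pos hx b).ne').congr_deriv ?_
  rw [rpow_sub_one hx.ne']
  field_simp

theorem integral_exp_mul_div_rpow_add_le (p : ℝ) {b c t : ℝ} (hb : 0 ≤ b) (hc : 0 < c)
    (ht : 0 ≤ t) :
    (p - b / c) * ∫ s in (0 : ℝ)..t, exp (p * s) / (s + c) ^ b ≤
      exp (p * t) / (t + c) ^ b - exp (p * 0) / (0 + c) ^ b := by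
  have hpos : ∀ s ∈ Icc 0 t, 0 < s + c := fun s hs => by linarith [hs.1]
  have hderiv : ∀ s ∈ Icc 0 t, HasDerivAt (fun s => exp (p * s) / (s + c) ^ b)
      (exp (p * s) / (s + c) ^ b * (p - b / (s + c))) s :=
    fun s hs => hasDerivAt_exp_mul_div_rpow_add p b c (hpos s hs)
  have hcont : ContinuousOn (fun s => exp (p * s) / (s + c) ^ b) (Icc 0 t) :=
    fun s hs => (hderiv s hs).continuousAt.continuousWithinAt
  rw [← integral_const_mul]
  refine integral_le_sub_of_hasDeriv_right_of_le ht hcont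
    (fun s hs => (hderiv s (Ioo_subset_Icc_self hs)).hasDerivWithinAt)
    ((hcont.const_smul (p - b / c)).integrableOn_Icc) fun s hs => ?_
  have hsc : b / (s + c) ≤ b / c := div_le_div_of_nonneg_left hb hc (by linarith [hs.1])
  have hf : 0 ≤ exp (p * s) / (s + c) ^ b :=
    div_nonneg (exp_pos _).le (rpow_nonneg (hpos s (Ioo_subset_Icc_self hs)).le b)
  rw [mul_comm]
  exact mul_le_mul_of_nonneg_left (by linarith) hf

theorem stmt12_general (p b c : ℝ) (hb : 0 < b) (hc : 0 < c) :
    ∀ t : ℝ, 0 < t →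
      (p - b / c) * (∫ s in (0:ℝ)..t, Real.exp (p * s) / (s + c) ^ b) <
        Real.exp (p * t) / (c + t) ^ b := by
  intro t ht
  have hf0 : 0 < exp (p * 0) / (0 + c) ^ b := by positivity
  rw [add_comm c t]
  linarith [integral_exp_mul_div_rpow_add_le p hb.le hc ht.le]

theorem stmt12 (p b c : ℝ) (hp : 0 < p) (hb : 0 < b) (hc : 0 < c) :
    ∀ t : ℝ, 0 < t →
      (p - b / c) * (∫ s in (0:ℝ)..t, Real.exp (p * s) / (s + c) ^ b) <
        Real.exp (p * t) / (c + t) ^ b :=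
  stmt12_general p b c hb hc
end

section
/- Let d, c, b > 0 with c ≥ 6b, and define a(t) = d/(c+t)^b for t ≥ 0, so that |a'(t)| = bd/(c+t)^{b+1}. Let F : H → H be a monotone operator, f_δ ∈ H, and let V_δ : [0,∞) → H satisfy F(V_δ(t)) + a(t)V_δ(t) = f_δ for all t ≥ 0. Then for every t ≥ 0: e^{−t/2}·∫_0^t e^{s/2}|a'(s)|·‖V_δ(s)‖ ds ≤ (1/2)·a(t)‖V_δ(t)‖. -/
/-!
Write `a(s) = d / (c + s) ^ b`. Since `a` is decreasing, monotonicity of `F` makes `‖V s‖`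
nondecreasing, so `‖V s‖ ≤ ‖V t‖` under the integral. The condition `c ≥ 6b` says exactly
`6 |a'| ≤ a`, which is equivalent to `e^{s/2} |a'(s)| ≤ ½ (e^{s/2} a(s))'`; integrating gives
`∫₀ᵗ e^{s/2} |a'| ≤ ½ e^{t/2} a(t)`.
-/

open scoped RealInnerProductSpace
open Set Real MeasureTheory

theorem norm_le_norm_of_add_smul_eq_add_smul {H : Type*} [NormedAddCommGroup H]
    [InnerProductSpace ℝ H] {F : H → H} (hF : ∀ u v : H, 0 ≤ ⟪F u - F v, u - v⟫)
    {u v : H} {α β : ℝ} (hα : 0 < α) (hβ : 0 ≤ β) (hβα : β ≤ α)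
    (huv : F u + α • u = F v + β • v) : ‖u‖ ≤ ‖v‖ := by
  have hFuv : F u - F v = β • v - α • u := by
    rw [sub_eq_sub_iff_add_eq_add, add_comm (β • v), ← huv]
  have key : α * ‖u‖ ^ 2 + β * ‖v‖ ^ 2 ≤ (α + β) * (‖u‖ * ‖v‖) := by
    have h := hF u v
    rw [hFuv] at h
    simp only [inner_sub_left, inner_sub_right, real_inner_smul_left,
      real_inner_self_eq_norm_sq, real_inner_comm u v] at h
    nlinarith [real_inner_le_norm u v]
  by_contra! hlt
  nlinarith [mul_pos hα (mul_pos (sub_pos.2 hlt) (sub_pos.2 hlt)),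
    mul_nonneg (mul_nonneg (sub_nonneg.2 hβα) (norm_nonneg v)) (sub_pos.2 hlt).le]

theorem monotoneOn_norm_of_add_smul_eq {H : Type*} [NormedAddCommGroup H]
    [InnerProductSpace ℝ H] {F : H → H} (hF : ∀ u v : H, 0 ≤ ⟪F u - F v, u - v⟫)
    {a : ℝ → ℝ} {S : Set ℝ} (ha : AntitoneOn a S) (ha_pos : ∀ t ∈ S, 0 < a t)
    {f : H} {V : ℝ → H} (hV : ∀ t ∈ S, F (V t) + a t • V t = f) :
    MonotoneOn (fun t => ‖V t‖) S := fun s hs t ht hst =>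
  norm_le_norm_of_add_smul_eq_add_smul hF (ha_pos s hs) (ha_pos t ht).le (ha hs ht hst)
    ((hV s hs).trans (hV t ht).symm)

theorem integral_exp_half_mul_le {a w : ℝ → ℝ} {t : ℝ} (ht : 0 ≤ t)
    (ha : ContinuousOn a (Icc 0 t)) (ha' : ∀ s ∈ Ioo 0 t, HasDerivAt a (-w s) s)
    (hw : IntegrableOn (fun s => exp (s / 2) * w s) (Icc 0 t))
    (hwa : ∀ s ∈ Ioo 0 t, 6 * w s ≤ a s) (ha₀ : 0 ≤ a 0) :
    ∫ s in 0..t, exp (s / 2) * w s ≤ 1 / 2 * exp (t / 2) * a t := by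
  have hderiv : ∀ s ∈ Ioo 0 t, HasDerivAt (fun s => 1 / 2 * exp (s / 2) * a s)
      (1 / 2 * (exp (s / 2) * (1 / 2)) * a s + 1 / 2 * exp (s / 2) * -w s) s := fun s hs =>
    (((hasDerivAt_id s).div_const 2).exp.const_mul _).mul (ha' s hs)
  have hcont : ContinuousOn (fun s => 1 / 2 * exp (s / 2) * a s) (Icc 0 t) :=
    (by fun_prop : Continuous fun s : ℝ => 1 / 2 * exp (s / 2)).continuousOn.mul ha
  calc ∫ s in 0..t, exp (s / 2) * w s
      ≤ 1 / 2 * exp (t / 2) * a t - 1 / 2 * exp (0 / 2) * a 0 :=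
        intervalIntegral.integral_le_sub_of_hasDeriv_right_of_le ht hcont
          (fun s hs => (hderiv s hs).hasDerivWithinAt) hw fun s hs => by
            nlinarith [exp_pos (s / 2), hwa s hs]
    _ ≤ 1 / 2 * exp (t / 2) * a t := by simp [ha₀]

theorem hasDerivAt_div_add_rpow {c d b s : ℝ} (hs : 0 < c + s) :
    HasDerivAt (fun s => d / (c + s) ^ b) (-(b * d / (c + s) ^ (b + 1))) s := by
  have hpos := Real.rpow_pos_of_pos hs b
  refine ((hasDerivAt_const s d).div
    (((hasDerivAt_id s).const_add c).rpow_const (p := b) (Or.inl hs.ne')) hpos.ne').congr_deriv ?_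
  rw [id, Real.rpow_add hs, Real.rpow_one, Real.rpow_sub hs, Real.rpow_one]
  field_simp
  ring

theorem six_mul_div_rpow_add_one_le {x b d : ℝ} (hx : 0 < x) (hd : 0 ≤ d) (hbx : 6 * b ≤ x) :
    6 * (b * d / x ^ (b + 1)) ≤ d / x ^ b := by
  have hpos := Real.rpow_pos_of_pos hx b
  rw [Real.rpow_add_one hx.ne']
  field_simp
  nlinarith [mul_le_mul_of_nonneg_left hbx (mul_nonneg hd hpos.le)]

theorem integral_mul_le_integral_mul_of_le {φ f : ℝ → ℝ} {r t K : ℝ} (hrt : r ≤ t)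
    (hφ : IntervalIntegrable φ volume r t) (hφ₀ : ∀ s ∈ Ioc r t, 0 ≤ φ s)
    (hf₀ : ∀ s ∈ Ioc r t, 0 ≤ f s) (hfK : ∀ s ∈ Ioc r t, f s ≤ K) :
    ∫ s in r..t, φ s * f s ≤ (∫ s in r..t, φ s) * K := by
  rw [← intervalIntegral.integral_mul_const, intervalIntegral.integral_of_le hrt,
    intervalIntegral.integral_of_le hrt]
  refine integral_mono_of_nonneg ?_ (hφ.1.mul_const K) ?_ <;>
    filter_upwards [ae_restrict_mem measurableSet_Ioc] with s hs
  · exact mul_nonneg (hφ₀ s hs) (hf₀ s hs)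
  · exact mul_le_mul_of_nonneg_left (hfK s hs) (hφ₀ s hs)

theorem stmt13 {H : Type*} [NormedAddCommGroup H] [InnerProductSpace ℝ H]
    (d c b : ℝ) (hd : 0 < d) (hc : 0 < c) (hb : 0 < b) (hcb : 6 * b ≤ c)
    (F : H → H) (hF : ∀ u v : H, 0 ≤ ⟪F u - F v, u - v⟫)
    (fδ : H) (V : ℝ → H)
    (hV : ∀ t : ℝ, 0 ≤ t → F (V t) + (d / (c + t) ^ b) • V t = fδ) :
    ∀ t : ℝ, 0 ≤ t →
      Real.exp (-t / 2) *
          (∫ s in (0:ℝ)..t, Real.exp (s / 2) * (b * d / (c + s) ^ (b + 1)) * ‖V s‖) ≤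
        1 / 2 * (d / (c + t) ^ b) * ‖V t‖ := by
  intro t ht
  have hcs : ∀ s ∈ Icc 0 t, 0 < c + s := fun s hs => by linarith [hs.1]
  have ha_anti : AntitoneOn (fun s => d / (c + s) ^ b) (Ici 0) := fun s hs r hr hsr =>
    div_le_div_of_nonneg_left hd.le (Real.rpow_pos_of_pos (by linarith [mem_Ici.1 hs]) b)
      (Real.rpow_le_rpow (by linarith [mem_Ici.1 hs]) (by linarith) hb.le)
  have hnorm := monotoneOn_norm_of_add_smul_eq hF ha_anti
    (fun s hs => div_pos hd (Real.rpow_pos_of_pos (by linarith [mem_Ici.1 hs]) b)) hV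
  have hweight : ContinuousOn (fun s => exp (s / 2) * (b * d / (c + s) ^ (b + 1))) (Icc 0 t) :=
    fun s hs => by
      have := hcs s hs
      exact ContinuousAt.continuousWithinAt (by fun_prop (disch := positivity))
  have hint := integral_exp_half_mul_le ht
    (fun s hs => (hasDerivAt_div_add_rpow (hcs s hs)).continuousAt.continuousWithinAt)
    (fun s hs => hasDerivAt_div_add_rpow (hcs s (Ioo_subset_Icc_self hs)))
    hweight.integrableOn_Icc
    (fun s hs => six_mul_div_rpow_add_one_le (hcs s (Ioo_subset_Icc_self hs)) hd.le
      (by linarith [hs.1]))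
    (div_pos hd (Real.rpow_pos_of_pos (by linarith) b)).le
  calc exp (-t / 2) * ∫ s in 0..t, exp (s / 2) * (b * d / (c + s) ^ (b + 1)) * ‖V s‖
      ≤ exp (-t / 2) * ((∫ s in 0..t, exp (s / 2) * (b * d / (c + s) ^ (b + 1))) * ‖V t‖) := by
        gcongr
        refine integral_mul_le_integral_mul_of_le ht (hweight.intervalIntegrable_of_Icc ht)
          (fun s hs => ?_) (fun s _ => norm_nonneg _) fun s hs => ?_
        · have := hcs s (Ioc_subset_Icc_self hs)
          positivity
        · exact hnorm hs.1.le ht hs.2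
    _ ≤ exp (-t / 2) * (1 / 2 * exp (t / 2) * (d / (c + t) ^ b) * ‖V t‖) := by gcongr
    _ = 1 / 2 * (d / (c + t) ^ b) * ‖V t‖ := by
        rw [show exp (-t / 2) = (exp (t / 2))⁻¹ by rw [← exp_neg, neg_div]]
        field_simp
end

section
/- Let F : H → H be a monotone operator that is Fréchet differentiable on H, let f_δ ∈ H, let a : [0,∞) → ℝ be differentiable with a(t) > 0 for all t, and let V : [0,∞) → H be differentiable with F(V(t)) + a(t)V(t) = f_δ for all t ≥ 0. Then for every t ≥ 0: a(t)‖V'(t)‖ ≤ |a'(t)|·‖V(t)‖, i.e., ‖V'(t)‖ ≤ (|a'(t)|/a(t))·‖V(t)‖. -/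
/-!
Differentiating `F (V t) + a t • V t = fδ` gives `F' (V t) (V' t) + a' t • V t + a t • V' t = 0`.
Pairing with `V' t`, monotonicity makes `⟪F' (V t) (V' t), V' t⟫ ≥ 0`, so Cauchy–Schwarz yields
`a t * ‖V' t‖ ^ 2 ≤ |a' t| * ‖V t‖ * ‖V' t‖`.
-/

open scoped RealInnerProductSpace

open Set

section

variable {H : Type*} [NormedAddCommGroup H] [InnerProductSpace ℝ H]

/-- Along the line `s ↦ u + s • h` monotonicity makes `s ↦ ⟪F (u + s • h), h⟫` nondecreasing;
its derivative at `0` is `⟪F' u h, h⟫`. -/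
lemma inner_fderiv_apply_self_nonneg {F : H → H} (hF : ∀ u v : H, 0 ≤ ⟪F u - F v, u - v⟫)
    {u : H} (hFd : DifferentiableAt ℝ F u) (h : H) : 0 ≤ ⟪fderiv ℝ F u h, h⟫ := by
  have hline : HasDerivAt (fun s : ℝ => u + s • h) h 0 := by
    simpa using ((hasDerivAt_id (0 : ℝ)).smul_const h).const_add u
  have hFline : HasDerivAt (fun s : ℝ => ⟪F (u + s • h), h⟫) ⟪fderiv ℝ F u h, h⟫ 0 := by
    have := (hFd.hasFDerivAt.comp_hasDerivAt_of_eq 0 hline (by simp)).inner ℝ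
      (hasDerivAt_const 0 h)
    rwa [inner_zero_right, zero_add] at this
  refine hFline.nonneg_of_monotone fun s s' hss' => ?_
  have key := hF (u + s' • h) (u + s • h)
  rw [add_sub_add_left_eq_sub, ← sub_smul, real_inner_smul_right, inner_sub_left] at key
  rcases hss'.eq_or_lt with rfl | hlt
  · rfl
  · exact sub_nonneg.mp (nonneg_of_mul_nonneg_right key (sub_pos.mpr hlt))

lemma mul_norm_le_of_add_smul_eq_zero {w v x : H} {b c : ℝ} (hw : 0 ≤ ⟪w, x⟫)
    (h : w + b • v + c • x = 0) : c * ‖x‖ ≤ |b| * ‖v‖ := by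
  have hinner : ⟪w, x⟫ + b * ⟪v, x⟫ + c * ‖x‖ ^ 2 = 0 := by
    simpa [inner_add_left, real_inner_smul_left, real_inner_self_eq_norm_sq] using
      congrArg (⟪·, x⟫) h
  have hCS : -(b * ⟪v, x⟫) ≤ |b| * (‖v‖ * ‖x‖) := by
    calc -(b * ⟪v, x⟫) ≤ |b * ⟪v, x⟫| := neg_le_abs _
      _ = |b| * |⟪v, x⟫| := abs_mul _ _
      _ ≤ |b| * (‖v‖ * ‖x‖) := by gcongr; exact abs_real_inner_le_norm v x
  rcases (norm_nonneg x).eq_or_lt with hx | hx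
  · rw [← hx, mul_zero]
    positivity
  · refine le_of_mul_le_mul_right ?_ hx
    nlinarith

end

lemma HasDerivAt.eq_zero_of_eqOn_Ici {E : Type*} [NormedAddCommGroup E] [NormedSpace ℝ E]
    {f : ℝ → E} {f' c : E} {t : ℝ} (hf : HasDerivAt f f' t) (hc : EqOn f (fun _ => c) (Ici t)) :
    f' = 0 :=
  (uniqueDiffOn_Ici t t self_mem_Ici).eq_deriv _ hf.hasDerivWithinAt
    ((hasDerivWithinAt_const t _ c).congr hc (hc self_mem_Ici))

theorem stmt16 {H : Type*} [NormedAddCommGroup H] [InnerProductSpace ℝ H]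
    (F : H → H) (hF : ∀ u v : H, 0 ≤ ⟪F u - F v, u - v⟫)
    (hFd : Differentiable ℝ F) (fδ : H)
    (a a' : ℝ → ℝ) (ha : ∀ t : ℝ, 0 ≤ t → HasDerivAt a (a' t) t)
    (hapos : ∀ t : ℝ, 0 ≤ t → 0 < a t)
    (V V' : ℝ → H) (hVd : ∀ t : ℝ, 0 ≤ t → HasDerivAt V (V' t) t)
    (hV : ∀ t : ℝ, 0 ≤ t → F (V t) + a t • V t = fδ) :
    ∀ t : ℝ, 0 ≤ t →
      a t * ‖V' t‖ ≤ |a' t| * ‖V t‖ ∧ ‖V' t‖ ≤ |a' t| / a t * ‖V t‖ := by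
  intro t ht
  have hderiv : HasDerivAt (fun s => F (V s) + a s • V s)
      (fderiv ℝ F (V t) (V' t) + a' t • V t + a t • V' t) t := by
    have := ((hFd (V t)).hasFDerivAt.comp_hasDerivAt t (hVd t ht)).add ((ha t ht).smul (hVd t ht))
    convert this using 1
    · rfl
    · abel
  have hzero := hderiv.eq_zero_of_eqOn_Ici fun s hs => hV s (ht.trans hs)
  have hmain := mul_norm_le_of_add_smul_eq_zero (inner_fderiv_apply_self_nonneg hF (hFd _) _) hzero
  refine ⟨hmain, ?_⟩
  rwa [div_mul_eq_mul_div, le_div_iff₀ (hapos t ht), mul_comm]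
end

section
/- Let F : H → H be a monotone operator, δ > 0, C > 1, a > 0, y ∈ H with F(y) = f, and f_δ ∈ H with ‖f − f_δ‖ ≤ δ. If V ∈ H satisfies F(V) + aV = f_δ and a‖V‖ ≥ Cδ (equivalently ‖F(V) − f_δ‖ ≥ Cδ), then δ ≤ a‖y‖/(C − 1). -/
open scoped RealInnerProductSpace

theorem stmt18 {H : Type*} [NormedAddCommGroup H] [InnerProductSpace ℝ H]
    (F : H → H) (hF : ∀ u v : H, 0 ≤ ⟪F u - F v, u - v⟫)
    (δ C a : ℝ) (hδ : 0 < δ) (hC : 1 < C) (ha : 0 < a)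
    (y f fδ : H) (hFy : F y = f) (hfδ : ‖f - fδ‖ ≤ δ)
    (V : H) (hV : F V + a • V = fδ) (hbig : C * δ ≤ a * ‖V‖) :
    δ ≤ a * ‖y‖ / (C - 1) := by
  set R := ‖V‖ with hR
  set s := ‖y‖ with hs
  set t := ‖V - y‖ with ht
  have hFV : F V = fδ - a • V := by rw [← hV]; abel
  have h0 := hF V y
  rw [hFV, hFy] at h0
  have hexp : ⟪fδ - a • V - f, V - y⟫ = ⟪fδ - f, V - y⟫ - a * ⟪V, V - y⟫ := by
    rw [show fδ - a • V - f = (fδ - f) - a • V by abel, inner_sub_left, real_inner_smul_left]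
  have h1 : a * ⟪V, V - y⟫ ≤ ⟪fδ - f, V - y⟫ := by
    rw [hexp] at h0; linarith
  have h2 : ⟪fδ - f, V - y⟫ ≤ δ * t := by
    calc ⟪fδ - f, V - y⟫ ≤ ‖fδ - f‖ * ‖V - y‖ := real_inner_le_norm _ _
    _ ≤ δ * t := by
        rw [norm_sub_rev] at hfδ
        exact mul_le_mul_of_nonneg_right hfδ (norm_nonneg _)
  have h3 : ⟪V, V - y⟫ = (t ^ 2 + R ^ 2 - s ^ 2) / 2 := by
    have hns : t ^ 2 = R ^ 2 - 2 * ⟪V, y⟫ + s ^ 2 := by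
      rw [ht, hR, hs]
      exact norm_sub_sq_real V y
    rw [inner_sub_right, real_inner_self_eq_norm_sq]
    linarith
  have hkey : a * (t ^ 2 + R ^ 2 - s ^ 2) ≤ 2 * δ * t := by
    rw [h3] at h1; linarith
  have htR : R - s ≤ t := norm_sub_norm_le V y
  have htRs : t ≤ R + s := norm_sub_le V y
  have ht0 : (0:ℝ) ≤ t := norm_nonneg _
  have hmain : a * R ≤ a * s + δ := by
    rcases le_or_gt R s with h | h
    · nlinarith
    · -- a t² + a(R−s)(R+s) ≤ 2δt, (R−s)(R+s) ≥ (R−s)t, t ≥ R−s > 0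
      nlinarith [mul_nonneg ha.le (mul_nonneg (by linarith : (0:ℝ) ≤ R - s) (by linarith : (0:ℝ) ≤ R + s - t)),
        mul_nonneg ha.le (mul_nonneg (by linarith : (0:ℝ) ≤ t - (R - s)) ht0)]
  rw [le_div_iff₀ (by linarith)]
  nlinarith
end
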